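/- For every t > 0, every x ∈ ℝ^d, and every direction u ∈ ℝ^d, the Hessian of the smoothed objective satisfies uᵀ ∇²_x g(x;t) u = E_{y∼p_{0|t}(·|x)}[ uᵀ ∇²f(y) u ] − (1/λ) · Var_{y∼p_{0|t}(·|x)}( ⟨∇f(y), u⟩ ). -/

import Mathlib

open MeasureTheory
open scoped RealInnerProductSpace

/-- The Gibbs density `p₀(y) = e^{-f(y)/λ} / ∫ e^{-f(z)/λ} dz`. -/
noncomputable def gibbs {d : ℕ} (lam : ℝ) (f : EuclideanSpace ℝ (Fin d) → ℝ)
    (y : EuclideanSpace ℝ (Fin d)) : ℝ :=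
  Real.exp (-(f y) / lam) / ∫ z, Real.exp (-(f z) / lam)

/-- The Gaussian kernel `k(z;t) = (2πt)^{-d/2} e^{-‖z‖²/(2t)}`. -/
noncomputable def gaussK {d : ℕ} (t : ℝ) (z : EuclideanSpace ℝ (Fin d)) : ℝ :=
  (2 * Real.pi * t) ^ (-(d : ℝ) / 2) * Real.exp (-‖z‖ ^ 2 / (2 * t))

/-- The smoothed density `p(x;t) = ∫ p₀(y) k(x-y;t) dy`. -/
noncomputable def smoothedDensity {d : ℕ} (lam : ℝ) (f : EuclideanSpace ℝ (Fin d) → ℝ)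
    (t : ℝ) (x : EuclideanSpace ℝ (Fin d)) : ℝ :=
  ∫ y, gibbs lam f y * gaussK t (x - y)

/-- The smoothed objective `g(x;t) = -λ log p(x;t)`. -/
noncomputable def smoothedObj {d : ℕ} (lam : ℝ) (f : EuclideanSpace ℝ (Fin d) → ℝ)
    (t : ℝ) (x : EuclideanSpace ℝ (Fin d)) : ℝ :=
  -lam * Real.log (smoothedDensity lam f t x)

/-- The posterior density `p_{0|t}(y|x) = p₀(y) k(x-y;t) / p(x;t)`. -/
noncomputable def posterior {d : ℕ} (lam : ℝ) (f : EuclideanSpace ℝ (Fin d) → ℝ)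
    (t : ℝ) (x y : EuclideanSpace ℝ (Fin d)) : ℝ :=
  gibbs lam f y * gaussK t (x - y) / smoothedDensity lam f t x

/-- The Hessian quadratic form `uᵀ ∇²g(x) u`, as the second directional derivative. -/
noncomputable def hessQF {d : ℕ} (g : EuclideanSpace ℝ (Fin d) → ℝ)
    (x u : EuclideanSpace ℝ (Fin d)) : ℝ :=
  (fderiv ℝ (fun x' => (fderiv ℝ g x') u) x) u

noncomputable def kD {d : ℕ} (t : ℝ) (z : EuclideanSpace ℝ (Fin d)) :
    EuclideanSpace ℝ (Fin d) →L[ℝ] ℝ :=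
  (-(gaussK t z) / t) • (innerSL ℝ z)

lemma gaussK_pos {d : ℕ} {t : ℝ} (ht : 0 < t) (z : EuclideanSpace ℝ (Fin d)) :
    0 < gaussK t z := by
  have : (0:ℝ) < 2 * Real.pi * t := by positivity
  exact mul_pos (Real.rpow_pos_of_pos this _) (Real.exp_pos _)

lemma gaussK_le {d : ℕ} {t : ℝ} (ht : 0 < t) (z : EuclideanSpace ℝ (Fin d)) :
    gaussK t z ≤ (2 * Real.pi * t) ^ (-(d : ℝ) / 2) := by
  have h1 : Real.exp (-‖z‖ ^ 2 / (2 * t)) ≤ 1 := by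
    rw [Real.exp_le_one_iff]
    have : (0:ℝ) ≤ ‖z‖^2 := by positivity
    have h2 : (0:ℝ) < 2*t := by linarith
    exact div_nonpos_of_nonpos_of_nonneg (by linarith) h2.le
  have hc : (0:ℝ) < (2 * Real.pi * t) ^ (-(d : ℝ) / 2) :=
    Real.rpow_pos_of_pos (by positivity) _
  calc gaussK t z ≤ (2 * Real.pi * t) ^ (-(d : ℝ) / 2) * 1 :=
        mul_le_mul_of_nonneg_left h1 hc.le
    _ = _ := mul_one _

lemma r_exp_bound {t : ℝ} (ht : 0 < t) {r : ℝ} (hr : 0 ≤ r) :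
    r * Real.exp (-r ^ 2 / (2 * t)) ≤ max 1 (2 * t) := by
  have hexp1 : Real.exp (-r ^ 2 / (2 * t)) ≤ 1 := by
    rw [Real.exp_le_one_iff]
    have : (0:ℝ) ≤ r^2 := by positivity
    exact div_nonpos_of_nonpos_of_nonneg (by linarith) (by linarith)
  rcases le_total r 1 with h | h
  · refine le_trans ?_ (le_max_left _ _)
    calc r * Real.exp (-r ^ 2 / (2 * t)) ≤ 1 * 1 :=
      mul_le_mul h hexp1 (Real.exp_pos _).le zero_le_one
    _ = 1 := mul_one 1
  · refine le_trans ?_ (le_max_right _ _)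
    have hs : 0 < r ^ 2 / (2 * t) := by positivity
    have h1 : r ^ 2 / (2 * t) ≤ Real.exp (r ^ 2 / (2 * t)) :=
      (Real.add_one_le_exp _).trans' (by linarith)
    have h2 : Real.exp (-r ^ 2 / (2 * t)) ≤ (2 * t) / r ^ 2 := by
      rw [neg_div, Real.exp_neg]
      rw [inv_le_iff_one_le_mul₀ (Real.exp_pos _)] at *
      · rw [div_mul_eq_mul_div, le_div_iff₀ (by positivity)]
        calc (1:ℝ) * r^2 = r^2 := one_mul _
          _ ≤ (2*t) * (r ^ 2 / (2 * t)) := by field_simp; exact le_rfl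
          _ ≤ 2 * t * Real.exp (r ^ 2 / (2 * t)) := by
              exact mul_le_mul_of_nonneg_left h1 (by linarith)
    calc r * Real.exp (-r ^ 2 / (2 * t)) ≤ r * ((2*t)/r^2) :=
          mul_le_mul_of_nonneg_left h2 (by linarith)
      _ = 2*t/r := by field_simp
      _ ≤ 2*t := by
          rw [div_le_iff₀ (by linarith)]
          nlinarith

lemma hasFDerivAt_gaussK {d : ℕ} {t : ℝ} (ht : 0 < t) (z : EuclideanSpace ℝ (Fin d)) :
    HasFDerivAt (gaussK t) (kD t z) z := by
  have h0 : HasFDerivAt (fun w : EuclideanSpace ℝ (Fin d) => (⟪w, w⟫ : ℝ))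
      ((fderivInnerCLM ℝ (z, z)).comp
        ((ContinuousLinearMap.id ℝ _).prod (ContinuousLinearMap.id ℝ _))) z :=
    (hasFDerivAt_id z).inner ℝ (hasFDerivAt_id z)
  have h1 := h0.const_mul ((-(2*t))⁻¹)
  have heq : (fun w : EuclideanSpace ℝ (Fin d) => (-(2*t))⁻¹ * (⟪w, w⟫ : ℝ))
      = fun w : EuclideanSpace ℝ (Fin d) => -‖w‖^2/(2*t) := by
    funext w
    rw [real_inner_self_eq_norm_sq]
    field_simp
  rw [heq] at h1
  have h2 := h1.exp
  have h3 := h2.const_mul ((2 * Real.pi * t) ^ (-(d : ℝ) / 2))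
  have hD : ((2 * Real.pi * t) ^ (-(d : ℝ) / 2)) •
      (Real.exp (-‖z‖^2/(2*t)) • ((-(2*t))⁻¹ • ((fderivInnerCLM ℝ (z, z)).comp
        ((ContinuousLinearMap.id ℝ _).prod (ContinuousLinearMap.id ℝ _)))))
      = kD t z := by
    ext w
    simp only [kD, gaussK, ContinuousLinearMap.coe_smul', Pi.smul_apply,
      ContinuousLinearMap.coe_comp', Function.comp_apply, ContinuousLinearMap.prod_apply,
      ContinuousLinearMap.coe_id', id_eq, fderivInnerCLM_apply, smul_eq_mul,
      innerSL_apply_apply]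
    rw [real_inner_comm w z]
    field_simp
    ring
  rw [hD] at h3
  exact h3

lemma norm_kD_le {d : ℕ} {t : ℝ} (ht : 0 < t) (z : EuclideanSpace ℝ (Fin d)) :
    ‖kD t z‖ ≤ (2 * Real.pi * t) ^ (-(d : ℝ) / 2) * max 1 (2 * t) / t := by
  have hc : (0:ℝ) < (2 * Real.pi * t) ^ (-(d : ℝ) / 2) :=
    Real.rpow_pos_of_pos (by positivity) _
  have : ‖kD t z‖ = |(-(gaussK t z) / t)| * ‖z‖ := by
    rw [kD]
    rw [norm_smul (-(gaussK t z) / t) ((innerSL ℝ) z), innerSL_apply_norm]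
    rfl
  rw [this, abs_div, abs_neg, abs_of_pos (gaussK_pos ht z), abs_of_pos ht]
  rw [div_mul_eq_mul_div, div_le_div_iff₀ ht ht]
  have h2 : gaussK t z * ‖z‖ ≤ (2 * Real.pi * t) ^ (-(d : ℝ) / 2) * max 1 (2 * t) := by
    rw [gaussK, mul_assoc]
    refine mul_le_mul_of_nonneg_left ?_ hc.le
    rw [mul_comm]
    exact r_exp_bound ht (norm_nonneg z)
  nlinarith

lemma continuous_gaussK {d : ℕ} (t : ℝ) : Continuous (gaussK (d := d) t) := by
  unfold gaussK
  exact continuous_const.mul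
    (Real.continuous_exp.comp (((continuous_norm.pow 2).neg).div_const _))

lemma continuous_kD {d : ℕ} (t : ℝ) : Continuous (kD (d := d) t) := by
  unfold kD
  exact (((continuous_gaussK t).neg).div_const _).smul (map_continuous (innerSL ℝ))

/-- Differentiation under the integral sign for convolutions with the Gaussian kernel. -/
lemma integrable_smul_kD {d : ℕ} {t : ℝ} (ht : 0 < t) {h : EuclideanSpace ℝ (Fin d) → ℝ}
    (hint : Integrable h) (hcont : Continuous h) (x : EuclideanSpace ℝ (Fin d)) :
    Integrable (fun y => h y • kD t (x - y)) := by
  refine (hint.norm.const_mul ((2 * Real.pi * t) ^ (-(d : ℝ) / 2) * max 1 (2 * t) / t)).mono'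
    ?_ ?_
  · exact (hcont.smul ((continuous_kD t).comp (continuous_const.sub continuous_id))).aestronglyMeasurable
  · refine Filter.Eventually.of_forall fun y => ?_
    rw [norm_smul (h y) (kD t _), mul_comm]
    exact mul_le_mul_of_nonneg_right (norm_kD_le ht _) (norm_nonneg _)

lemma hasFDerivAt_conv {d : ℕ} {t : ℝ} (ht : 0 < t) {h : EuclideanSpace ℝ (Fin d) → ℝ}
    (hint : Integrable h) (hcont : Continuous h) (x : EuclideanSpace ℝ (Fin d)) :
    HasFDerivAt (fun x' => ∫ y, h y * gaussK t (x' - y)) (∫ y, h y • kD t (x - y)) x := by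
  set C := (2 * Real.pi * t) ^ (-(d : ℝ) / 2) * max 1 (2 * t) / t with hC
  refine hasFDerivAt_integral_of_dominated_of_fderiv_le
    (F := fun x' y => h y * gaussK t (x' - y)) (F' := fun x' y => h y • kD t (x' - y))
    (bound := fun y => C * ‖h y‖) Filter.univ_mem ?_ ?_ ?_ ?_ ?_ ?_
  · refine Filter.Eventually.of_forall fun x' => ?_
    exact (hcont.mul ((continuous_gaussK t).comp
      (continuous_const.sub continuous_id))).aestronglyMeasurable
  · refine (hint.norm.const_mul ((2 * Real.pi * t) ^ (-(d : ℝ) / 2))).mono'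
      ((hcont.mul ((continuous_gaussK t).comp
        (continuous_const.sub continuous_id))).aestronglyMeasurable) ?_
    refine Filter.Eventually.of_forall fun y => ?_
    rw [norm_mul, mul_comm]
    refine mul_le_mul_of_nonneg_right ?_ (norm_nonneg _)
    rw [Real.norm_eq_abs, abs_of_pos (gaussK_pos ht _)]
    exact gaussK_le ht _
  · exact (hcont.smul ((continuous_kD t).comp
      (continuous_const.sub continuous_id))).aestronglyMeasurable
  · refine Filter.Eventually.of_forall fun y => fun x' _ => ?_
    rw [norm_smul (h y) (kD t _), mul_comm]
    exact mul_le_mul_of_nonneg_right (norm_kD_le ht _) (norm_nonneg _)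
  · exact hint.norm.const_mul C
  · refine Filter.Eventually.of_forall fun y => fun x' _ => ?_
    have hbase := (hasFDerivAt_gaussK ht (x' - y)).comp x' ((hasFDerivAt_id x').sub_const y)
    rw [ContinuousLinearMap.comp_id] at hbase
    exact hbase.const_mul (h y)

section GibbsAux

variable {d : ℕ} {lam : ℝ} {f : EuclideanSpace ℝ (Fin d) → ℝ}

lemma gibbs_pos (hZpos : 0 < ∫ z, Real.exp (-(f z) / lam)) (y : EuclideanSpace ℝ (Fin d)) :
    0 < gibbs lam f y := div_pos (Real.exp_pos _) hZpos

lemma gibbs_continuous (hfc : Continuous f) : Continuous (gibbs lam f) := by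
  unfold gibbs
  exact (Real.continuous_exp.comp (hfc.neg.div_const lam)).div_const _

lemma gibbs_integrable (hZfin : Integrable (fun z => Real.exp (-(f z) / lam))) :
    Integrable (gibbs lam f) := hZfin.div_const _

lemma hasFDerivAt_gibbs {y : EuclideanSpace ℝ (Fin d)} (hdf : DifferentiableAt ℝ f y) :
    HasFDerivAt (gibbs lam f) ((-(1 / lam) * gibbs lam f y) • fderiv ℝ f y) y := by
  set Z := ∫ z, Real.exp (-(f z) / lam) with hZ
  have h1 : HasFDerivAt (fun w => -(1 / lam) * f w) ((-(1 / lam)) • fderiv ℝ f y) y :=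
    hdf.hasFDerivAt.const_mul _
  have h2 := (h1.exp).const_mul Z⁻¹
  have hfun : (fun w => Z⁻¹ * Real.exp (-(1 / lam) * f w)) = gibbs lam f := by
    funext w
    have hw : -(1 / lam) * f w = -(f w) / lam := by ring
    rw [hw, gibbs, ← hZ]
    exact (div_eq_inv_mul _ _).symm
  rw [hfun] at h2
  refine h2.congr_fderiv ?_
  ext w
  have hy : -(1 / lam) * f y = -(f y) / lam := by ring
  simp only [ContinuousLinearMap.coe_smul', Pi.smul_apply, smul_eq_mul, gibbs, hy]
  ring

lemma hasFDerivAt_fderiv_apply (hC2 : ContDiff ℝ 2 f) (y u : EuclideanSpace ℝ (Fin d)) :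
    HasFDerivAt (fun y' => fderiv ℝ f y' u)
      ((ContinuousLinearMap.apply ℝ ℝ u).comp (fderiv ℝ (fderiv ℝ f) y)) y := by
  have h1 : ContDiff ℝ 1 (fderiv ℝ f) := hC2.fderiv_right (m := 1) (by norm_num)
  have h2 : DifferentiableAt ℝ (fderiv ℝ f) y := (h1.differentiable (by norm_num)) y
  exact (ContinuousLinearMap.apply ℝ ℝ u).hasFDerivAt.comp y h2.hasFDerivAt

lemma hessQF_eq (hC2 : ContDiff ℝ 2 f) (y u : EuclideanSpace ℝ (Fin d)) :
    hessQF f y u = fderiv ℝ (fderiv ℝ f) y u u := by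
  rw [hessQF, (hasFDerivAt_fderiv_apply hC2 y u).fderiv]
  rfl

lemma abs_hessQF_le (hC2 : ContDiff ℝ 2 f) (y u : EuclideanSpace ℝ (Fin d)) :
    |hessQF f y u| ≤ ‖fderiv ℝ (fderiv ℝ f) y‖ * ‖u‖ * ‖u‖ := by
  rw [hessQF_eq hC2]
  calc |fderiv ℝ (fderiv ℝ f) y u u| ≤ ‖fderiv ℝ (fderiv ℝ f) y u‖ * ‖u‖ :=
        (fderiv ℝ (fderiv ℝ f) y u).le_opNorm u
    _ ≤ ‖fderiv ℝ (fderiv ℝ f) y‖ * ‖u‖ * ‖u‖ :=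
        mul_le_mul_of_nonneg_right ((fderiv ℝ (fderiv ℝ f) y).le_opNorm u) (norm_nonneg u)

lemma continuous_fderiv_apply (hC2 : ContDiff ℝ 2 f) (u : EuclideanSpace ℝ (Fin d)) :
    Continuous (fun y => fderiv ℝ f y u) := by
  have h1 : Continuous (fderiv ℝ f) := (hC2.fderiv_right (m := 1) (by norm_num)).continuous
  exact ((ContinuousLinearMap.apply ℝ ℝ u).continuous).comp h1

lemma continuous_hessQF (hC2 : ContDiff ℝ 2 f) (u : EuclideanSpace ℝ (Fin d)) :
    Continuous (fun y => hessQF f y u) := by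
  have h1 : ContDiff ℝ 1 (fderiv ℝ f) := hC2.fderiv_right (m := 1) (by norm_num)
  have h2 : Continuous (fderiv ℝ (fderiv ℝ f)) := (h1.fderiv_right (m := 0) (by norm_num)).continuous
  have h3 : Continuous (fun y => fderiv ℝ (fderiv ℝ f) y u u) :=
    (ContinuousLinearMap.apply ℝ ℝ u).continuous.comp
      (((ContinuousLinearMap.apply ℝ (EuclideanSpace ℝ (Fin d) →L[ℝ] ℝ) u).continuous).comp h2)
  have : (fun y => hessQF f y u) = fun y => fderiv ℝ (fderiv ℝ f) y u u := by
    funext y; exact hessQF_eq hC2 y u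
  rw [this]; exact h3

lemma continuous_norm_fderiv_fderiv (hC2 : ContDiff ℝ 2 f) :
    Continuous (fun y => ‖fderiv ℝ (fderiv ℝ f) y‖) := by
  have h1 : ContDiff ℝ 1 (fderiv ℝ f) := hC2.fderiv_right (m := 1) (by norm_num)
  exact ((h1.fderiv_right (m := 0) (by norm_num)).continuous).norm

end GibbsAux

lemma integrable_mul_gaussK {d : ℕ} {t : ℝ} (ht : 0 < t) {h : EuclideanSpace ℝ (Fin d) → ℝ}
    (hint : Integrable h) (hcont : Continuous h) (x : EuclideanSpace ℝ (Fin d)) :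
    Integrable (fun y => h y * gaussK t (x - y)) := by
  refine (hint.norm.const_mul ((2 * Real.pi * t) ^ (-(d : ℝ) / 2))).mono'
    ((hcont.mul ((continuous_gaussK t).comp
      (continuous_const.sub continuous_id))).aestronglyMeasurable) ?_
  refine Filter.Eventually.of_forall fun y => ?_
  rw [norm_mul, mul_comm]
  refine mul_le_mul_of_nonneg_right ?_ (norm_nonneg _)
  rw [Real.norm_eq_abs, abs_of_pos (gaussK_pos ht _)]
  exact gaussK_le ht _

lemma continuous_kD_apply {d : ℕ} (t : ℝ) (x u : EuclideanSpace ℝ (Fin d)) :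
    Continuous (fun y => kD t (x - y) u) :=
  (ContinuousLinearMap.apply ℝ ℝ u).continuous.comp
    ((continuous_kD t).comp (continuous_const.sub continuous_id))

lemma integrable_mul_kD_apply {d : ℕ} {t : ℝ} (ht : 0 < t) {h : EuclideanSpace ℝ (Fin d) → ℝ}
    (hint : Integrable h) (hcont : Continuous h) (x u : EuclideanSpace ℝ (Fin d)) :
    Integrable (fun y => h y * kD t (x - y) u) := by
  refine (hint.norm.const_mul
      ((2 * Real.pi * t) ^ (-(d : ℝ) / 2) * max 1 (2 * t) / t * ‖u‖)).mono'
    ((hcont.mul (continuous_kD_apply t x u)).aestronglyMeasurable) ?_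
  refine Filter.Eventually.of_forall fun y => ?_
  rw [norm_mul, mul_comm]
  refine mul_le_mul_of_nonneg_right ?_ (norm_nonneg _)
  calc ‖kD t (x - y) u‖ ≤ ‖kD t (x - y)‖ * ‖u‖ := (kD t (x - y)).le_opNorm u
    _ ≤ _ := mul_le_mul_of_nonneg_right (norm_kD_le ht _) (norm_nonneg _)

set_option maxHeartbeats 2000000 in
/-- the Hessian quadratic form of the smoothed objective equals the posterior
expectation of the Hessian quadratic form of `f`, minus `(1/λ)` times the posterior variance of
`⟨∇f(y), u⟩`. -/
theorem hessian_smoothed_expectation_minus_variance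
    (d : ℕ) (hd : 1 ≤ d) (lam : ℝ) (hlam : 0 < lam)
    (f : EuclideanSpace ℝ (Fin d) → ℝ) (hf : Measurable f)
    (hZpos : 0 < ∫ z, Real.exp (-(f z) / lam))
    (hZfin : Integrable (fun z => Real.exp (-(f z) / lam)))
    (hC2 : ContDiff ℝ 2 f)
    (hgradint : Integrable (fun y => ‖gradient f y‖ ^ 2 * Real.exp (-(f y) / lam)))
    (hhessint : Integrable
      (fun y => ‖fderiv ℝ (fun y' => fderiv ℝ f y') y‖ * Real.exp (-(f y) / lam)))
    (t : ℝ) (ht : 0 < t) (x u : EuclideanSpace ℝ (Fin d)) :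
    hessQF (fun z => smoothedObj lam f t z) x u
      = (∫ y, posterior lam f t x y * hessQF f y u)
        - (1 / lam) *
          ((∫ y, posterior lam f t x y * ⟪gradient f y, u⟫ ^ 2)
            - (∫ y, posterior lam f t x y * ⟪gradient f y, u⟫) ^ 2) := by
  have hlam0 : lam ≠ 0 := hlam.ne'
  have hfc : Continuous f := hC2.continuous
  have hdf : Differentiable ℝ f := hC2.differentiable (by norm_num)
  have hg0int : Integrable (gibbs lam f) := gibbs_integrable hZfin
  have hg0cont : Continuous (gibbs lam f) := gibbs_continuous hfc
  have hg0pos : ∀ y, 0 < gibbs lam f y := gibbs_pos hZpos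
  -- inner products vs fderiv
  have hgi : ∀ y : EuclideanSpace ℝ (Fin d), (⟪gradient f y, u⟫ : ℝ) = fderiv ℝ f y u := by
    intro y
    unfold gradient
    exact InnerProductSpace.toDual_symm_apply
  have hgn : ∀ y : EuclideanSpace ℝ (Fin d), ‖gradient f y‖ = ‖fderiv ℝ f y‖ := by
    intro y
    unfold gradient
    exact LinearIsometryEquiv.norm_map _ _
  -- integrability facts
  have Igrad2 : Integrable (fun y => ‖fderiv ℝ f y‖ ^ 2 * gibbs lam f y) := by
    refine (hgradint.div_const (∫ z, Real.exp (-(f z) / lam))).congr ?_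
    refine Filter.Eventually.of_forall fun y => ?_
    simp only [gibbs]
    rw [hgn y]
    exact mul_div_assoc _ _ _
  have Ihess2 : Integrable (fun y => ‖fderiv ℝ (fderiv ℝ f) y‖ * gibbs lam f y) := by
    refine (hhessint.div_const (∫ z, Real.exp (-(f z) / lam))).congr ?_
    refine Filter.Eventually.of_forall fun y => ?_
    simp only [gibbs]
    exact mul_div_assoc _ _ _
  have hnDf_cont : Continuous (fun y => ‖fderiv ℝ f y‖) :=
    ((hC2.fderiv_right (m := 1) (by norm_num)).continuous).norm
  have Igrad1 : Integrable (fun y => ‖fderiv ℝ f y‖ * gibbs lam f y) := by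
    refine (hg0int.add Igrad2).mono' ((hnDf_cont.mul hg0cont).aestronglyMeasurable) ?_
    refine Filter.Eventually.of_forall fun y => ?_
    have h0 : (0:ℝ) ≤ gibbs lam f y := (hg0pos y).le
    have h1 : (0:ℝ) ≤ ‖fderiv ℝ f y‖ := norm_nonneg _
    rw [Real.norm_eq_abs, abs_of_nonneg (by positivity)]
    have h2 : ‖fderiv ℝ f y‖ ≤ 1 + ‖fderiv ℝ f y‖ ^ 2 := by nlinarith
    calc ‖fderiv ℝ f y‖ * gibbs lam f y ≤ (1 + ‖fderiv ℝ f y‖ ^ 2) * gibbs lam f y :=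
          mul_le_mul_of_nonneg_right h2 h0
      _ = gibbs lam f y + ‖fderiv ℝ f y‖ ^ 2 * gibbs lam f y := by ring
  have hDfu_cont : Continuous (fun y => fderiv ℝ f y u * gibbs lam f y) :=
    (continuous_fderiv_apply hC2 u).mul hg0cont
  have IDfu : Integrable (fun y => fderiv ℝ f y u * gibbs lam f y) := by
    refine (Igrad1.const_mul ‖u‖).mono' hDfu_cont.aestronglyMeasurable ?_
    refine Filter.Eventually.of_forall fun y => ?_
    rw [Real.norm_eq_abs, abs_mul, abs_of_nonneg (hg0pos y).le]
    calc |fderiv ℝ f y u| * gibbs lam f y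
        ≤ (‖fderiv ℝ f y‖ * ‖u‖) * gibbs lam f y := by
          refine mul_le_mul_of_nonneg_right ?_ (hg0pos y).le
          calc |fderiv ℝ f y u| = ‖fderiv ℝ f y u‖ := rfl
            _ ≤ ‖fderiv ℝ f y‖ * ‖u‖ := (fderiv ℝ f y).le_opNorm u
      _ = ‖u‖ * (‖fderiv ℝ f y‖ * gibbs lam f y) := by ring
  have hHg_cont : Continuous (fun y => hessQF f y u * gibbs lam f y) :=
    (continuous_hessQF hC2 u).mul hg0cont
  have IHg : Integrable (fun y => hessQF f y u * gibbs lam f y) := by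
    refine ((Ihess2.const_mul (‖u‖ * ‖u‖)).mono' hHg_cont.aestronglyMeasurable ?_)
    refine Filter.Eventually.of_forall fun y => ?_
    rw [Real.norm_eq_abs, abs_mul, abs_of_nonneg (hg0pos y).le]
    calc |hessQF f y u| * gibbs lam f y
        ≤ (‖fderiv ℝ (fderiv ℝ f) y‖ * ‖u‖ * ‖u‖) * gibbs lam f y :=
          mul_le_mul_of_nonneg_right (abs_hessQF_le hC2 y u) (hg0pos y).le
      _ = ‖u‖ * ‖u‖ * (‖fderiv ℝ (fderiv ℝ f) y‖ * gibbs lam f y) := by ring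
  have hDf2_cont : Continuous (fun y => (fderiv ℝ f y u) ^ 2 * gibbs lam f y) :=
    ((continuous_fderiv_apply hC2 u).pow 2).mul hg0cont
  have IDf2 : Integrable (fun y => (fderiv ℝ f y u) ^ 2 * gibbs lam f y) := by
    refine (Igrad2.const_mul (‖u‖ ^ 2)).mono' hDf2_cont.aestronglyMeasurable ?_
    refine Filter.Eventually.of_forall fun y => ?_
    rw [Real.norm_eq_abs, abs_mul, abs_of_nonneg (hg0pos y).le, abs_pow]
    calc |fderiv ℝ f y u| ^ 2 * gibbs lam f y
        ≤ (‖fderiv ℝ f y‖ * ‖u‖) ^ 2 * gibbs lam f y := by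
          refine mul_le_mul_of_nonneg_right ?_ (hg0pos y).le
          refine pow_le_pow_left₀ (abs_nonneg _) ?_ 2
          exact (fderiv ℝ f y).le_opNorm u
      _ = ‖u‖ ^ 2 * (‖fderiv ℝ f y‖ ^ 2 * gibbs lam f y) := by ring
  have hgdiff : Differentiable ℝ (gibbs lam f) :=
    fun y => (hasFDerivAt_gibbs (hdf y)).differentiableAt
  -- kernel derivative in the y variable
  have hGd : ∀ x' y : EuclideanSpace ℝ (Fin d),
      HasFDerivAt (fun w => gaussK t (x' - w)) (-(kD t (x' - y))) y := by
    intro x' y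
    have h := (hasFDerivAt_gaussK ht (x' - y)).comp y ((hasFDerivAt_id y).const_sub x')
    refine h.congr_fderiv ?_
    ext w
    simp
  have hfderivG : ∀ x' y : EuclideanSpace ℝ (Fin d),
      fderiv ℝ (fun w => gaussK t (x' - w)) y u = -(kD t (x' - y) u) := by
    intro x' y
    rw [(hGd x' y).fderiv]
    rfl
  have hfderivg0 : ∀ y, fderiv ℝ (gibbs lam f) y u
      = -(1 / lam) * gibbs lam f y * fderiv ℝ f y u := by
    intro y
    rw [(hasFDerivAt_gibbs (hdf y)).fderiv, ContinuousLinearMap.smul_apply, smul_eq_mul]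
  -- first integration by parts
  have ibp1 : ∀ x' : EuclideanSpace ℝ (Fin d),
      (∫ y, gibbs lam f y * kD t (x' - y) u)
        = -(1 / lam) * ∫ y, (fderiv ℝ f y u * gibbs lam f y) * gaussK t (x' - y) := by
    intro x'
    have h3 : Integrable (fun y => gibbs lam f y * gaussK t (x' - y)) :=
      integrable_mul_gaussK ht hg0int hg0cont x'
    have h2 : Integrable
        (fun y => gibbs lam f y * fderiv ℝ (fun w => gaussK t (x' - w)) y u) := by
      refine ((integrable_mul_kD_apply ht hg0int hg0cont x' u).neg).congr ?_
      exact Filter.Eventually.of_forall fun y => by simp only [Pi.neg_apply, hfderivG, hfderivg0]; ring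
    have h1 : Integrable
        (fun y => fderiv ℝ (gibbs lam f) y u * gaussK t (x' - y)) := by
      refine ((integrable_mul_gaussK ht IDfu hDfu_cont x').const_mul (-(1 / lam))).congr ?_
      exact Filter.Eventually.of_forall fun y => by simp only [Pi.neg_apply, hfderivg0]; ring
    have key := integral_mul_fderiv_eq_neg_fderiv_mul_of_integrable h1 h2 h3 (fun y _ => hgdiff y)
      (fun y _ => (hGd x' y).differentiableAt)
    have e1 : ∫ y, gibbs lam f y * fderiv ℝ (fun w => gaussK t (x' - w)) y u
        = -∫ y, gibbs lam f y * kD t (x' - y) u := by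
      rw [← integral_neg]
      exact integral_congr_ae (Filter.Eventually.of_forall fun y => by simp only [Pi.neg_apply, hfderivG, hfderivg0]; ring)
    have e2 : ∫ y, fderiv ℝ (gibbs lam f) y u * gaussK t (x' - y)
        = -(1 / lam) * ∫ y, (fderiv ℝ f y u * gibbs lam f y) * gaussK t (x' - y) := by
      rw [← integral_const_mul]
      exact integral_congr_ae (Filter.Eventually.of_forall fun y => by simp only [Pi.neg_apply, hfderivG, hfderivg0]; ring)
    rw [e1, e2] at key
    linarith [key]
  -- derivative of the smoothed density
  have hD0 : ∀ x' : EuclideanSpace ℝ (Fin d),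
      HasFDerivAt (smoothedDensity lam f t) (∫ y, gibbs lam f y • kD t (x' - y)) x' :=
    fun x' => hasFDerivAt_conv ht hg0int hg0cont x'
  have hD0u : ∀ x' : EuclideanSpace ℝ (Fin d),
      (∫ y, gibbs lam f y • kD t (x' - y)) u
        = -(1 / lam) * ∫ y, (fderiv ℝ f y u * gibbs lam f y) * gaussK t (x' - y) := by
    intro x'
    rw [ContinuousLinearMap.integral_apply (integrable_smul_kD ht hg0int hg0cont x')]
    rw [← ibp1 x']
    exact integral_congr_ae (Filter.Eventually.of_forall fun y => rfl)
  have hq0pos : ∀ x' : EuclideanSpace ℝ (Fin d), 0 < smoothedDensity lam f t x' := by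
    intro x'
    have hposy : ∀ y, 0 < gibbs lam f y * gaussK t (x' - y) :=
      fun y => mul_pos (hg0pos y) (gaussK_pos ht _)
    rw [smoothedDensity, integral_pos_iff_support_of_nonneg (fun y => (hposy y).le)
      (integrable_mul_gaussK ht hg0int hg0cont x')]
    have hsupp : Function.support (fun y => gibbs lam f y * gaussK t (x' - y)) = Set.univ :=
      Set.eq_univ_iff_forall.2 fun y => (hposy y).ne'
    rw [hsupp]
    exact isOpen_univ.measure_pos volume ⟨0, trivial⟩
  -- derivative of the smoothed objective
  have hobj : ∀ x' : EuclideanSpace ℝ (Fin d),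
      HasFDerivAt (fun z => smoothedObj lam f t z)
        ((-lam * (smoothedDensity lam f t x')⁻¹) • (∫ y, gibbs lam f y • kD t (x' - y))) x' := by
    intro x'
    have h1 := ((hD0 x').log (hq0pos x').ne').const_mul (-lam)
    rw [smul_smul] at h1
    exact h1
  have hfobj : ∀ x' : EuclideanSpace ℝ (Fin d),
      fderiv ℝ (fun z => smoothedObj lam f t z) x' u
        = (∫ y, (fderiv ℝ f y u * gibbs lam f y) * gaussK t (x' - y))
            * (smoothedDensity lam f t x')⁻¹ := by
    intro x'
    rw [(hobj x').fderiv, ContinuousLinearMap.smul_apply, hD0u x', smul_eq_mul]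
    field_simp
  -- derivative of the numerator q1
  have hD1 : HasFDerivAt
      (fun x' => ∫ y, (fderiv ℝ f y u * gibbs lam f y) * gaussK t (x' - y))
      (∫ y, (fderiv ℝ f y u * gibbs lam f y) • kD t (x - y)) x :=
    hasFDerivAt_conv ht IDfu hDfu_cont x
  -- product rule for the function y ↦ Df y * gibbs y
  have hprod : ∀ y : EuclideanSpace ℝ (Fin d),
      HasFDerivAt (fun w => fderiv ℝ f w u * gibbs lam f w)
        ((fderiv ℝ f y u) • ((-(1 / lam) * gibbs lam f y) • fderiv ℝ f y)
          + gibbs lam f y •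
            ((ContinuousLinearMap.apply ℝ ℝ u).comp (fderiv ℝ (fderiv ℝ f) y))) y :=
    fun y => (hasFDerivAt_fderiv_apply hC2 y u).mul (hasFDerivAt_gibbs (hdf y))
  have hfderivh : ∀ y, fderiv ℝ (fun w => fderiv ℝ f w u * gibbs lam f w) y u
      = hessQF f y u * gibbs lam f y - (1 / lam) * ((fderiv ℝ f y u) ^ 2 * gibbs lam f y) := by
    intro y
    rw [(hprod y).fderiv]
    simp only [ContinuousLinearMap.add_apply, ContinuousLinearMap.smul_apply, smul_eq_mul,
      ContinuousLinearMap.coe_comp', Function.comp_apply, ContinuousLinearMap.apply_apply]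
    rw [hessQF_eq hC2]
    ring
  -- second integration by parts
  have ibp2 : (∫ y, (fderiv ℝ f y u * gibbs lam f y) • kD t (x - y)) u
      = (∫ y, (hessQF f y u * gibbs lam f y) * gaussK t (x - y))
        - (1 / lam) * ∫ y, ((fderiv ℝ f y u) ^ 2 * gibbs lam f y) * gaussK t (x - y) := by
    rw [ContinuousLinearMap.integral_apply (integrable_smul_kD ht IDfu hDfu_cont x)]
    have h3 := integrable_mul_gaussK ht IDfu hDfu_cont x
    have h2 : Integrable (fun y => (fderiv ℝ f y u * gibbs lam f y)
        * fderiv ℝ (fun w => gaussK t (x - w)) y u) := by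
      refine ((integrable_mul_kD_apply ht IDfu hDfu_cont x u).neg).congr ?_
      exact Filter.Eventually.of_forall fun y => by simp only [Pi.neg_apply, hfderivG, hfderivg0]; ring
    have h1 : Integrable (fun y =>
        fderiv ℝ (fun w => fderiv ℝ f w u * gibbs lam f w) y u * gaussK t (x - y)) := by
      refine ((integrable_mul_gaussK ht IHg hHg_cont x).sub
        ((integrable_mul_gaussK ht IDf2 hDf2_cont x).const_mul (1 / lam))).congr ?_
      refine Filter.Eventually.of_forall fun y => ?_
      rw [Pi.sub_apply]
      simp only [hfderivh]
      ring
    have key := integral_mul_fderiv_eq_neg_fderiv_mul_of_integrable h1 h2 h3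
      (fun y _ => (hprod y).differentiableAt) (fun y _ => (hGd x y).differentiableAt)
    have e1 : ∫ y, (fderiv ℝ f y u * gibbs lam f y)
          * fderiv ℝ (fun w => gaussK t (x - w)) y u
        = -∫ y, (fderiv ℝ f y u * gibbs lam f y) * kD t (x - y) u := by
      rw [← integral_neg]
      exact integral_congr_ae (Filter.Eventually.of_forall fun y => by simp only [Pi.neg_apply, Pi.sub_apply, hfderivG, hfderivg0, hfderivh]; ring)
    have e2 : ∫ y, fderiv ℝ (fun w => fderiv ℝ f w u * gibbs lam f w) y u * gaussK t (x - y)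
        = (∫ y, (hessQF f y u * gibbs lam f y) * gaussK t (x - y))
          - (1 / lam) * ∫ y, ((fderiv ℝ f y u) ^ 2 * gibbs lam f y) * gaussK t (x - y) := by
      rw [← integral_const_mul, ← integral_sub (integrable_mul_gaussK ht IHg hHg_cont x)
        ((integrable_mul_gaussK ht IDf2 hDf2_cont x).const_mul (1 / lam))]
      exact integral_congr_ae (Filter.Eventually.of_forall fun y => by simp only [Pi.neg_apply, Pi.sub_apply, hfderivG, hfderivg0, hfderivh]; ring)
    rw [e1, e2] at key
    have estep : ∫ y, ((fderiv ℝ f y u * gibbs lam f y) • kD t (x - y)) u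
        = ∫ y, (fderiv ℝ f y u * gibbs lam f y) * kD t (x - y) u :=
      integral_congr_ae (Filter.Eventually.of_forall fun y => rfl)
    rw [estep]
    linarith [key]
  -- the directional derivative of the objective, as a function of x'
  have hG1 : (fun x' => fderiv ℝ (fun z => smoothedObj lam f t z) x' u)
      = fun x' => (∫ y, (fderiv ℝ f y u * gibbs lam f y) * gaussK t (x' - y))
          * (smoothedDensity lam f t x')⁻¹ := by
    funext x'
    exact hfobj x'
  -- derivative of the reciprocal of the density
  have hinv : HasFDerivAt (fun w => (smoothedDensity lam f t w)⁻¹)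
      ((-((smoothedDensity lam f t x) ^ 2)⁻¹) • (∫ y, gibbs lam f y • kD t (x - y))) x :=
    (hasDerivAt_inv (hq0pos x).ne').comp_hasFDerivAt x (hD0 x)
  have hmul : HasFDerivAt (fun x' => (∫ y, (fderiv ℝ f y u * gibbs lam f y) * gaussK t (x' - y))
      * (smoothedDensity lam f t x')⁻¹) _ x := hD1.mul hinv
  -- compute the Hessian quadratic form of the objective
  have lhs_eq : hessQF (fun z => smoothedObj lam f t z) x u
      = ((∫ y, (hessQF f y u * gibbs lam f y) * gaussK t (x - y))
            - (1 / lam) * ∫ y, ((fderiv ℝ f y u) ^ 2 * gibbs lam f y) * gaussK t (x - y))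
          * (smoothedDensity lam f t x)⁻¹
        + (1 / lam) * ((∫ y, (fderiv ℝ f y u * gibbs lam f y) * gaussK t (x - y))
            * (smoothedDensity lam f t x)⁻¹) ^ 2 := by
    rw [hessQF, hG1, hmul.fderiv]
    simp only [ContinuousLinearMap.add_apply, ContinuousLinearMap.smul_apply, smul_eq_mul]
    rw [ibp2, hD0u x]
    field_simp
    ring
  rw [lhs_eq]
  -- rewrite the posterior integrals
  have hq0ne : smoothedDensity lam f t x ≠ 0 := (hq0pos x).ne'
  have hpostA : ∫ y, posterior lam f t x y * hessQF f y u
      = (smoothedDensity lam f t x)⁻¹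
          * ∫ y, (hessQF f y u * gibbs lam f y) * gaussK t (x - y) := by
    rw [← integral_const_mul]
    refine integral_congr_ae (Filter.Eventually.of_forall fun y => ?_)
    simp only [posterior]
    field_simp
  have hpostB : ∫ y, posterior lam f t x y * (⟪gradient f y, u⟫ : ℝ) ^ 2
      = (smoothedDensity lam f t x)⁻¹
          * ∫ y, ((fderiv ℝ f y u) ^ 2 * gibbs lam f y) * gaussK t (x - y) := by
    rw [← integral_const_mul]
    refine integral_congr_ae (Filter.Eventually.of_forall fun y => ?_)
    simp only [posterior, hgi]
    field_simp
  have hpostC : ∫ y, posterior lam f t x y * (⟪gradient f y, u⟫ : ℝ)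
      = (smoothedDensity lam f t x)⁻¹
          * ∫ y, (fderiv ℝ f y u * gibbs lam f y) * gaussK t (x - y) := by
    rw [← integral_const_mul]
    refine integral_congr_ae (Filter.Eventually.of_forall fun y => ?_)
    simp only [posterior, hgi]
    field_simp
  rw [hpostA, hpostB, hpostC]
  ring
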